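/- Let G be a connected bipartite graph with colour classes V and E and a fixed total order on E. If there exists a hypertree of G with exactly k internally inactive hyperedges, where k ≥ 1, then there exists a hypertree of G with exactly k − 1 internally inactive hyperedges. -/

import Mathlib

open SimpleGraph

variable {V E : Type*}

/-- The bipartite graph on `V ⊕ E` determined by the incidence relation `r`. -/
def BipGraph (r : V → E → Prop) : SimpleGraph (V ⊕ E) where
  Adj x y := (∃ v e, x = Sum.inl v ∧ y = Sum.inr e ∧ r v e) ∨
             (∃ v e, x = Sum.inr e ∧ y = Sum.inl v ∧ r v e)
  symm := by
    refine ⟨?_⟩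
    rintro x y (⟨v, e, rfl, rfl, h⟩ | ⟨v, e, rfl, rfl, h⟩)
    · exact Or.inr ⟨v, e, rfl, rfl, h⟩
    · exact Or.inl ⟨v, e, rfl, rfl, h⟩
  loopless := by
    refine ⟨?_⟩
    rintro x (⟨v, e, rfl, h, _⟩ | ⟨v, e, rfl, h, _⟩) <;> simp_all

/-- `τ` is a spanning tree of `G`. -/
def IsSpanningTree {α : Type*} (G τ : SimpleGraph α) : Prop :=
  τ ≤ G ∧ τ.Connected ∧ τ.IsAcyclic

/-- A hypertree of the hypergraph induced by the bipartite graph `BipGraph r`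
(with `E` the set of hyperedges): a function realized by a spanning tree. -/
def IsHypertree (r : V → E → Prop) (f : E → ℕ) : Prop :=
  ∃ τ : SimpleGraph (V ⊕ E), IsSpanningTree (BipGraph r) τ ∧
    ∀ e : E, (τ.neighborSet (Sum.inr e)).ncard = f e + 1

/-- The restriction of a graph `H` on `V ⊕ E` (typically a subgraph of `BipGraph r`)
to the hyperedge set `A` together with all `V`-vertices incident (in `G`) to `A`. -/
def BipRestrict (r : V → E → Prop) (H : SimpleGraph (V ⊕ E)) (A : Set E) :
    SimpleGraph ({v : V // ∃ e ∈ A, r v e} ⊕ A) where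
  Adj x y := H.Adj (Sum.elim (fun v => Sum.inl v.1) (fun e => Sum.inr e.1) x)
               (Sum.elim (fun v => Sum.inl v.1) (fun e => Sum.inr e.1) y)
  symm := ⟨fun _ _ h => H.adj_symm h⟩
  loopless := by
    refine ⟨?_⟩
    rintro (v | e) h <;> exact H.irrefl h

/-- `μ(A) = |⋃A| - c(A)`. -/
noncomputable def mu (r : V → E → Prop) (A : Set E) : ℕ :=
  Nat.card {v : V // ∃ e ∈ A, r v e} -
    Nat.card (BipRestrict r (BipGraph r) A).ConnectedComponent

/-- `A` is tight at `f`. -/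
noncomputable def Tight (r : V → E → Prop) (f : E → ℕ) (A : Finset E) : Prop :=
  ∑ e ∈ A, f e = mu r (↑A : Set E)

open Classical in
/-- The function obtained from `f` by decreasing `f e` by one and increasing `f e'` by one. -/
noncomputable def Transfer (f : E → ℕ) (e e' : E) : E → ℕ :=
  fun x => if x = e then f e - 1 else if x = e' then f e' + 1 else f x

/-- The internal inactivity of `f`: the number of internally inactive hyperedges. -/
noncomputable def intInact (r : V → E → Prop) [LT E] (f : E → ℕ) : ℕ :=
  Nat.card {e : E // ∃ e', e' < e ∧ IsHypertree r (Transfer f e e')}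

/-- The external inactivity of `f`: the number of externally inactive hyperedges. -/
noncomputable def extInact (r : V → E → Prop) [LT E] (f : E → ℕ) : ℕ :=
  Nat.card {e : E // ∃ e', e' < e ∧ IsHypertree r (Transfer f e' e)}

/-- The interior polynomial `I_G(x) = ∑_f x^{ῑ(f)}`. -/
noncomputable def interiorPoly (r : V → E → Prop) [Fintype E] [LT E] : Polynomial ℤ :=
  ∑ i ∈ Finset.range (Fintype.card E + 1),
    Polynomial.C ((Nat.card {f : E → ℕ // IsHypertree r f ∧ intInact r f = i} : ℕ) : ℤ) *
      Polynomial.X ^ i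

/-- The exterior polynomial `X_G(y) = ∑_f y^{ε̄(f)}`. -/
noncomputable def exteriorPoly (r : V → E → Prop) [Fintype E] [LT E] : Polynomial ℤ :=
  ∑ i ∈ Finset.range (Fintype.card E + 1),
    Polynomial.C ((Nat.card {f : E → ℕ // IsHypertree r f ∧ extInact r f = i} : ℕ) : ℤ) *
      Polynomial.X ^ i


/-!
Hypertrees have an exchange property: if `f` and `h` are hypertrees with `h d < f d`, then
`Transfer f d x` is a hypertree for some `x` with `f x < h x`. This comes from basis exchange
for spanning trees: delete an edge at `d` of a tree realizing `f` that is missing from a tree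
realizing `h`, reconnect through an edge of the latter, and repeat while the surplus keeps
moving to hyperedges `z` with `h z ≤ f z`.

Let `e` be the least internally inactive hyperedge of `f`, witnessed by `e' < e`, and put
`g = Transfer f e e'`. By the exchange property every hyperedge above `e` that is inactive
for `f` stays inactive for `g`, so `ῑ(f) ≤ ῑ(g) + 1`, and `g` is lexicographically larger
than `f`. So among the hypertrees with `ῑ ≥ j`, which are finitely many, a lexicographically
maximal one has `ῑ = j`.
-/

theorem Set.ncard_sep_insert_sdiff_add {β : Type*} [Finite β] {S : Set β} {a b : β}
    (ha : a ∈ S) (hb : b ∉ S) (P : β → Prop) [DecidablePred P] :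
    {e ∈ insert b (S \ {a}) | P e}.ncard + (if P a then 1 else 0) =
      {e ∈ S | P e}.ncard + (if P b then 1 else 0) := by
  have hs : ∀ c : β, (if P c then 1 else 0) = {e ∈ ({c} : Set β) | P e}.ncard := by
    intro c
    split_ifs with h
    · exact (Set.ncard_eq_one.mpr ⟨c, by ext; aesop⟩).symm
    · exact ((Set.ncard_eq_zero).mpr (by ext; aesop)).symm
  rw [hs, hs, ← Set.ncard_union_eq, ← Set.ncard_union_eq]
  · congr 1
    ext e
    by_cases e = a <;> aesop
  · simp only [Set.disjoint_left]; aesop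
  · simp only [Set.disjoint_left]; aesop

namespace SimpleGraph

variable {α : Type*} {G τ σ : SimpleGraph α} {w u p q : α}

theorem ncard_neighborSet_eq_ncard_incidenceSet (x : α) :
    (τ.neighborSet x).ncard = (τ.incidenceSet x).ncard := by
  classical
  rw [← Nat.card_coe_set_eq, ← Nat.card_coe_set_eq]
  exact Nat.card_congr (τ.incidenceSetEquivNeighborSet x).symm

theorem reachable_or_reachable_deleteEdges (hτ : τ.Connected) (x : α) :
    (τ.deleteEdges {s(w, u)}).Reachable u x ∨ (τ.deleteEdges {s(w, u)}).Reachable w x := by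
  by_contra! hx
  let S := {y | (τ.deleteEdges {s(w, u)}).Reachable u y ∨
    (τ.deleteEdges {s(w, u)}).Reachable w y}
  obtain ⟨d, -, hd, hd'⟩ := (hτ u x).some.exists_boundary_dart S (.inl .rfl) (by simpa [S])
  by_cases hdwu : s(d.fst, d.snd) = s(w, u)
  · rcases Sym2.eq_iff.mp hdwu with ⟨-, h⟩ | ⟨-, h⟩ <;> simp [S, h] at hd'
  · have hd_adj : (τ.deleteEdges {s(w, u)}).Adj d.fst d.snd := by simp [hdwu]
    exact hd' (hd.imp (·.trans hd_adj.reachable) (·.trans hd_adj.reachable))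

theorem connected_deleteEdges_sup_edge (hτ : τ.Connected)
    (hp : (τ.deleteEdges {s(w, u)}).Reachable u p)
    (hq : (τ.deleteEdges {s(w, u)}).Reachable w q) :
    (τ.deleteEdges {s(w, u)} ⊔ edge p q).Connected := by
  have hle : τ.deleteEdges {s(w, u)} ≤ τ.deleteEdges {s(w, u)} ⊔ edge p q := le_sup_left
  have hpq : (τ.deleteEdges {s(w, u)} ⊔ edge p q).Reachable p q := by
    by_cases h : p = q
    · exact h ▸ .rfl
    · exact Adj.reachable (.inr ((edge_adj _ _ _ _).mpr ⟨.inl ⟨rfl, rfl⟩, h⟩))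
  have huw := ((hp.mono hle).trans hpq).trans (hq.mono hle).symm
  have hu : ∀ z, (τ.deleteEdges {s(w, u)} ⊔ edge p q).Reachable u z := fun z =>
    (reachable_or_reachable_deleteEdges hτ z).elim (·.mono hle) fun h => huw.trans (h.mono hle)
  have := hτ.nonempty
  exact .mk fun x y => (hu x).symm.trans (hu y)

theorem edgeSet_deleteEdges_sup_edge (hpq : p ≠ q) :
    (τ.deleteEdges {s(w, u)} ⊔ edge p q).edgeSet = insert s(p, q) (τ.edgeSet \ {s(w, u)}) := by
  rw [edgeSet_sup, edgeSet_deleteEdges, edgeSet_edge_of_ne hpq, Set.union_singleton]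

theorem ncard_neighborSet_deleteEdges_sup_edge [Finite α] [DecidableEq α] (hwu : τ.Adj w u)
    (hpq : ¬ τ.Adj p q) (hne : p ≠ q) (x : α) :
    ((τ.deleteEdges {s(w, u)} ⊔ edge p q).neighborSet x).ncard +
        (if x ∈ s(w, u) then 1 else 0) =
      (τ.neighborSet x).ncard + (if x ∈ s(p, q) then 1 else 0) := by
  rw [ncard_neighborSet_eq_ncard_incidenceSet, ncard_neighborSet_eq_ncard_incidenceSet,
    incidenceSet, incidenceSet, edgeSet_deleteEdges_sup_edge hne]
  exact Set.ncard_sep_insert_sdiff_add (show s(w, u) ∈ τ.edgeSet from hwu)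
    (show s(p, q) ∉ τ.edgeSet from hpq) _

theorem ncard_edgeSet_deleteEdges_sup_edge_sdiff_lt [Finite α] (hwu : τ.Adj w u)
    (hσwu : ¬ σ.Adj w u) (hσpq : σ.Adj p q) :
    ((τ.deleteEdges {s(w, u)} ⊔ edge p q).edgeSet \ σ.edgeSet).ncard <
      (τ.edgeSet \ σ.edgeSet).ncard := by
  rw [edgeSet_deleteEdges_sup_edge hσpq.ne,
    Set.insert_sdiff_of_mem _ (show s(p, q) ∈ σ.edgeSet from hσpq), Set.sdiff_sdiff_comm]
  exact Set.ncard_sdiff_singleton_lt_of_mem ⟨hwu, hσwu⟩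

theorem _root_.IsSpanningTree.exists_exchange [Finite α] (hτ : IsSpanningTree G τ)
    (hσ : IsSpanningTree G σ) (hwu : τ.Adj w u) (hσwu : ¬ σ.Adj w u) :
    ∃ p q, σ.Adj p q ∧ ¬ τ.Adj p q ∧
      IsSpanningTree G (τ.deleteEdges {s(w, u)} ⊔ edge p q) := by
  obtain ⟨hτG, hτc, hτa⟩ := hτ
  set R := τ.deleteEdges {s(w, u)}
  have huw : ¬ R.Reachable u w := fun h =>
    isBridge_iff.mp (isAcyclic_iff_forall_adj_isBridge.mp hτa hwu) h.symm
  obtain ⟨⟨⟨p, q⟩, hσpq⟩, -, hp, hq⟩ :=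
    (hσ.2.1 u w).some.exists_boundary_dart {x | R.Reachable u x} .rfl huw
  replace hp : R.Reachable u p := hp
  replace hq : ¬ R.Reachable u q := hq
  have hτpq : ¬ τ.Adj p q := by
    intro h
    by_cases hs : s(p, q) = s(w, u)
    · rcases Sym2.eq_iff.mp hs with ⟨rfl, -⟩ | ⟨rfl, rfl⟩
      exacts [huw hp, hσwu hσpq.symm]
    · exact hq (hp.trans (by simpa [R, hs] using h : R.Adj p q).reachable)
  have hcard := (isTree_iff_connected_and_card.mp ⟨hτc, hτa⟩).2
  have htree : (R ⊔ edge p q).IsTree := by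
    refine isTree_iff_connected_and_card.mpr ⟨?_, ?_⟩
    · exact connected_deleteEdges_sup_edge hτc hp
        ((reachable_or_reachable_deleteEdges hτc q).resolve_left hq)
    · rw [← hcard, Nat.card_coe_set_eq, Nat.card_coe_set_eq,
        edgeSet_deleteEdges_sup_edge hσpq.ne,
        Set.ncard_insert_of_notMem (fun h => hτpq h.1),
        Set.ncard_sdiff_singleton_add_one (show s(w, u) ∈ τ.edgeSet from hwu)]
  exact ⟨p, q, hσpq, hτpq, sup_le ((deleteEdges_le _).trans hτG)
    ((edge_le_iff G).mpr (.inr (hσ.1 hσpq))), htree.1, htree.2⟩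

end SimpleGraph

open SimpleGraph

section Exchange

variable {V E : Type*} {r : V → E → Prop} {τ σ τ' : SimpleGraph (V ⊕ E)} {f h : E → ℕ}
  {d z x : E}

def Realizes (τ : SimpleGraph (V ⊕ E)) (f : E → ℕ) : Prop :=
  ∀ e, (τ.neighborSet (.inr e)).ncard = f e + 1

theorem transfer_apply_left : Transfer f d z d = f d - 1 := by simp [Transfer]

theorem transfer_apply_right (hzd : z ≠ d) : Transfer f d z z = f z + 1 := by
  simp [Transfer, hzd]

theorem transfer_apply_of_ne (hxd : x ≠ d) (hxz : x ≠ z) : Transfer f d z x = f x := by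
  simp [Transfer, hxd, hxz]

theorem transfer_transfer (hzd : z ≠ d) (hxd : x ≠ d) (hxz : x ≠ z) :
    Transfer (Transfer f d z) z x = Transfer f d x := by
  ext c
  simp only [Transfer]
  split_ifs <;> simp_all

theorem BipGraph.exists_eq_inl_of_adj_inr (hτ : τ ≤ BipGraph r) {y : V ⊕ E}
    (h : τ.Adj (.inr d) y) : ∃ v, y = .inl v := by
  rcases hτ h with ⟨v, e, h1, rfl, -⟩ | ⟨v, e, -, rfl, -⟩
  exacts [(Sum.inr_ne_inl h1).elim, ⟨v, rfl⟩]

theorem BipGraph.exists_inr_mem_iff {p q : V ⊕ E} (h : (BipGraph r).Adj p q) :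
    ∃ z : E, ∀ c, Sum.inr c ∈ s(p, q) ↔ c = z := by
  rcases h with ⟨v, e, rfl, rfl, -⟩ | ⟨v, e, rfl, rfl, -⟩ <;> exact ⟨e, by simp⟩

theorem IsSpanningTree.exists_exchange_at_inr [Finite V] [Finite E] [DecidableEq E]
    (hτ : IsSpanningTree (BipGraph r) τ) (hσ : IsSpanningTree (BipGraph r) σ)
    (hd : (σ.neighborSet (.inr d)).ncard < (τ.neighborSet (.inr d)).ncard) :
    ∃ τ' z, IsSpanningTree (BipGraph r) τ' ∧
      (τ'.edgeSet \ σ.edgeSet).ncard < (τ.edgeSet \ σ.edgeSet).ncard ∧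
      ∀ c, (τ'.neighborSet (.inr c)).ncard + (if c = d then 1 else 0) =
        (τ.neighborSet (.inr c)).ncard + (if c = z then 1 else 0) := by
  classical
  obtain ⟨u, hτu, hσu⟩ := Set.exists_mem_notMem_of_ncard_lt_ncard hd
  obtain ⟨v, rfl⟩ := BipGraph.exists_eq_inl_of_adj_inr hτ.1 hτu
  obtain ⟨p, q, hσpq, hτpq, hτ'⟩ := hτ.exists_exchange hσ hτu hσu
  obtain ⟨z, hz⟩ := BipGraph.exists_inr_mem_iff (hσ.1 hσpq)
  refine ⟨_, z, hτ', ncard_edgeSet_deleteEdges_sup_edge_sdiff_lt hτu hσu hσpq, fun c => ?_⟩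
  simpa [hz] using ncard_neighborSet_deleteEdges_sup_edge hτu hτpq hσpq.ne (.inr c)

theorem Realizes.transfer_of_ncard_add [DecidableEq E] (hτ : Realizes τ f) (hfd : 1 ≤ f d)
    (hzd : z ≠ d) (h : ∀ c, (τ'.neighborSet (.inr c)).ncard + (if c = d then 1 else 0) =
      (τ.neighborSet (.inr c)).ncard + (if c = z then 1 else 0)) :
    Realizes τ' (Transfer f d z) := by
  intro c
  have hc := h c
  rw [hτ c] at hc
  by_cases hcd : c = d
  · subst hcd
    simp only [if_pos, if_neg hzd.symm, transfer_apply_left] at hc ⊢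
    omega
  by_cases hcz : c = z
  · subst hcz
    simp only [if_pos, if_neg hcd, transfer_apply_right hzd] at hc ⊢
    omega
  · simp only [if_neg hcd, if_neg hcz, transfer_apply_of_ne hcd hcz] at hc ⊢
    omega

theorem IsSpanningTree.exists_transfer_isHypertree [Finite V] [Finite E]
    (hτ : IsSpanningTree (BipGraph r) τ) (hσ : IsSpanningTree (BipGraph r) σ)
    (hτf : Realizes τ f) (hσh : Realizes σ h) (hd : h d < f d) :
    ∃ x, f x < h x ∧ IsHypertree r (Transfer f d x) := by
  classical
  induction hn : (τ.edgeSet \ σ.edgeSet).ncard using Nat.strong_induction_on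
    generalizing τ f d with
  | _ n ih =>
  obtain ⟨τ', z, hτ', hlt, hdeg⟩ :=
    hτ.exists_exchange_at_inr hσ (d := d) (by rw [hτf, hσh]; omega)
  rw [hn] at hlt
  by_cases hzd : z = d
  · refine ih _ hlt hτ' (fun c => ?_) hd rfl
    have := hdeg c
    rw [hzd, hτf] at this
    omega
  have hτ'f := hτf.transfer_of_ncard_add (by omega) hzd hdeg
  by_cases hfz : f z < h z
  · exact ⟨z, hfz, τ', hτ', hτ'f⟩
  obtain ⟨x, hx, hxT⟩ :=
    ih _ hlt hτ' hτ'f (d := z) (by rw [transfer_apply_right hzd]; omega) rfl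
  have hxz : x ≠ z := by rintro rfl; rw [transfer_apply_right hzd] at hx; omega
  have hxd : x ≠ d := by rintro rfl; rw [transfer_apply_left] at hx; omega
  rw [transfer_apply_of_ne hxd hxz] at hx
  exact ⟨x, hx, transfer_transfer hzd hxd hxz ▸ hxT⟩

theorem IsHypertree.exists_transfer [Finite V] [Finite E] (hf : IsHypertree r f)
    (hh : IsHypertree r h) (hd : h d < f d) : ∃ x, f x < h x ∧ IsHypertree r (Transfer f d x) :=
  let ⟨_, hτ, hτf⟩ := hf
  let ⟨_, hσ, hσh⟩ := hh
  hτ.exists_transfer_isHypertree hσ hτf hσh hd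

end Exchange

section Inactivity

variable {V E : Type*} {r : V → E → Prop} {f : E → ℕ} {d d' e e' : E}

theorem IsHypertree.one_le_of_transfer [Finite V] [Finite E] (hf : IsHypertree r f)
    (hd : d' ≠ d) (hT : IsHypertree r (Transfer f d d')) : 1 ≤ f d := by
  -- if `f d = 0`, then `Transfer f d d'` dominates `f`, so no exchange back to `f` exists
  by_contra! h0
  obtain ⟨x, hx, -⟩ := hT.exists_transfer hf (d := d') (by rw [transfer_apply_right hd]; omega)
  simp only [Transfer] at hx
  split_ifs at hx <;> subst_vars <;> omega

theorem IsHypertree.lt_card [Finite V] [Finite E] (hf : IsHypertree r f) (e : E) :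
    f e < Nat.card (V ⊕ E) := by
  obtain ⟨τ, -, hτ⟩ := hf
  have := Set.ncard_le_card (τ.neighborSet (.inr e))
  rw [hτ e] at this
  omega

theorem finite_setOf_isHypertree [Finite V] [Finite E] : {f : E → ℕ | IsHypertree r f}.Finite :=
  (Set.Finite.pi' fun _ => Set.finite_Iio (Nat.card (V ⊕ E))).subset fun _ hf => hf.lt_card

def intInactSet (r : V → E → Prop) [LT E] (f : E → ℕ) : Set E :=
  {e | ∃ e', e' < e ∧ IsHypertree r (Transfer f e e')}

theorem intInact_eq_ncard [LT E] : intInact r f = (intInactSet r f).ncard :=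
  Nat.card_coe_set_eq _

theorem toLex_lt_toLex_transfer [LinearOrder E] (he : e' < e) :
    toLex f < toLex (Transfer f e e') :=
  ⟨e', fun _ hj => (transfer_apply_of_ne (hj.trans he).ne hj.ne).symm,
    show f e' < Transfer f e e' e' by rw [transfer_apply_right he.ne]; omega⟩

variable [Finite V] [Finite E] [LinearOrder E]

theorem IsHypertree.mem_intInactSet_transfer (hf : IsHypertree r f) (he : e' < e)
    (hg : IsHypertree r (Transfer f e e')) (hd : d ∈ intInactSet r f) (hed : e < d) :
    d ∈ intInactSet r (Transfer f e e') := by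
  obtain ⟨d', hd', hT⟩ := hd
  have hfd := hf.one_le_of_transfer hd'.ne hT
  have hde : d ≠ e := hed.ne'
  have hde' : d ≠ e' := (he.trans hed).ne'
  obtain ⟨x, hx, hxT⟩ := hg.exists_transfer hT (d := d)
    (by rw [transfer_apply_left, transfer_apply_of_ne hde hde']; omega)
  refine ⟨x, ?_, hxT⟩
  -- the two transfers agree outside `{e, e', d, d'}`, and `e, e', d'` all lie below `d`
  by_contra! hdx
  rcases hdx.eq_or_lt with rfl | hdx
  · rw [transfer_apply_left, transfer_apply_of_ne hde hde'] at hx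
    omega
  · rw [transfer_apply_of_ne (hed.trans hdx).ne' ((he.trans hed).trans hdx).ne',
      transfer_apply_of_ne hdx.ne' (hd'.trans hdx).ne'] at hx
    exact lt_irrefl _ hx

theorem IsHypertree.exists_lt_toLex_intInact_le_succ (hf : IsHypertree r f)
    (hne : (intInactSet r f).Nonempty) :
    ∃ g, IsHypertree r g ∧ toLex f < toLex g ∧ intInact r f ≤ intInact r g + 1 := by
  obtain ⟨e, he, hmin⟩ := Set.exists_min_image (intInactSet r f) id (Set.toFinite _) hne
  have ⟨e', he', hg⟩ := he
  refine ⟨_, hg, toLex_lt_toLex_transfer he', ?_⟩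
  have hsub : intInactSet r f \ {e} ⊆ intInactSet r (Transfer f e e') := fun d hd =>
    hf.mem_intInactSet_transfer he' hg hd.1 ((hmin d hd.1).lt_of_ne (Ne.symm hd.2))
  rw [intInact_eq_ncard, intInact_eq_ncard, ← Set.ncard_sdiff_singleton_add_one he]
  exact Nat.add_le_add_right (Set.ncard_le_ncard hsub) 1

theorem IsHypertree.exists_intInact_eq_of_le (hf : IsHypertree r f) {j : ℕ}
    (hj : j ≤ intInact r f) : ∃ g, IsHypertree r g ∧ intInact r g = j := by
  obtain ⟨g, ⟨hg, hjg⟩, hmax⟩ := Set.Finite.exists_maximalFor toLex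
    {g | IsHypertree r g ∧ j ≤ intInact r g}
    (finite_setOf_isHypertree.subset fun _ hg => hg.1) ⟨f, hf, hj⟩
  refine ⟨g, hg, le_antisymm (not_lt.mp fun hlt => ?_) hjg⟩
  have hne : (intInactSet r g).Nonempty :=
    Set.nonempty_of_ncard_ne_zero (by rw [← intInact_eq_ncard]; omega)
  obtain ⟨g', hg', hlex, hle⟩ := hg.exists_lt_toLex_intInact_le_succ hne
  exact (hmax ⟨hg', by omega⟩ hlex.le).not_gt hlex

end Inactivity

theorem exists_intInact_pred_general {V E : Type*} [Fintype V] [Fintype E] [LinearOrder E]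
    (r : V → E → Prop) (k : ℕ)
    (h : ∃ f : E → ℕ, IsHypertree r f ∧ intInact r f = k) :
    ∃ g : E → ℕ, IsHypertree r g ∧ intInact r g = k - 1 := by
  obtain ⟨f, hf, rfl⟩ := h
  exact hf.exists_intInact_eq_of_le (Nat.sub_le _ 1)

/-- if there is a hypertree with internal inactivity `k ≥ 1`, then there is one
with internal inactivity `k - 1`. -/
theorem exists_intInact_pred {V E : Type*} [Fintype V] [Fintype E] [LinearOrder E]
    (r : V → E → Prop) (hconn : (BipGraph r).Connected) (k : ℕ) (hk : 1 ≤ k)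
    (h : ∃ f : E → ℕ, IsHypertree r f ∧ intInact r f = k) :
    ∃ g : E → ℕ, IsHypertree r g ∧ intInact r g = k - 1 :=
  exists_intInact_pred_general r k h
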